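/- arXiv:2503.22198 — 4 statements merged into one kernel-verified Lean document; each statement's English description precedes it below -/
import Mathlib

section
/- Let R(x,t₂) = R₀ + ℏ R₁ + ℏ² R₂ with R₀ = x⁵ + 3t₂x³ − αx² + (3(9072t₂² + 8000αβ − 34560t₂β² − 51975β⁴ − 15120δ)/12320)x − 9(9072t₂²β + 1840αβ² − 6840t₂β³ − 31185β⁵ − 221760γ² − 15120βδ)/24640, R₁ = 18γ/(2x − 3β), R₂ = 3/(2x − 3β)², and B(x,t₂) = 2/(2x − 3β). If (α, β, γ, δ) are differentiable functions of t₂ satisfying ℏα' = −3βℏ/2, ℏβ' = −12γ, ℏγ' = −9(336t₂² − 160αβ + 1800t₂β² + 1925β⁴ − 560δ)/12320, ℏδ' = (103680t₂βγ − 12000αγ + 311850β³γ + 728t₂ℏ − 4665β²ℏ)/1890, then 2 ∂R/∂t₂ + ℏ² ∂³B/∂x³ − 4R ∂B/∂x − 2B ∂R/∂x = 0 identically in x (on the domain x ≠ 3β/2). -/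
/-- The potential `R(x,t₂)` of the singularity reduction of the Garnier system of
type 9/2. -/
noncomputable def RGar92 (ℏ : ℂ) (α β γ δ : ℂ → ℂ) (t x : ℂ) : ℂ :=
  (x ^ 5 + 3 * t * x ^ 3 - α t * x ^ 2
    + (3 * (9072 * t ^ 2 + 8000 * α t * β t - 34560 * t * (β t) ^ 2
        - 51975 * (β t) ^ 4 - 15120 * δ t) / 12320) * x
    - 9 * (9072 * t ^ 2 * β t + 1840 * α t * (β t) ^ 2 - 6840 * t * (β t) ^ 3
        - 31185 * (β t) ^ 5 - 221760 * (γ t) ^ 2 - 15120 * β t * δ t) / 24640)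
  + ℏ * (18 * γ t / (2 * x - 3 * β t))
  + ℏ ^ 2 * (3 / (2 * x - 3 * β t) ^ 2)

/-- The deformation coefficient `B(x,t₂) = 2/(2x−3β)`. -/
noncomputable def BGar92 (β : ℂ → ℂ) (t x : ℂ) : ℂ := 2 / (2 * x - 3 * β t)

/-! The `x`-derivatives of `B` are read off from the iterated derivatives of `(x - 3β/2)⁻¹`,
and the derivatives of `R` are computed termwise. Since `ℏ ≠ 0`, the ODE system determines
`α', β', γ', δ'`; after substituting them the claim is an identity of rational functions whose
denominators are powers of `ℏ` and `2x - 3β`, checked by clearing denominators. -/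

lemma iter_deriv_BGar92 (β : ℂ → ℂ) (t : ℂ) (k : ℕ) :
    deriv^[k] (BGar92 β t) =
      fun y => (-1) ^ k * k.factorial * (y - 3 * β t / 2) ^ (-1 - k : ℤ) := by
  have hB : BGar92 β t = fun y => (1 * y - 3 * β t / 2)⁻¹ := by
    ext y
    rw [BGar92, one_mul, ← inv_div]
    congr 1
    ring
  rw [hB, iter_deriv_inv_linear_sub]
  simp only [one_pow, mul_one, one_mul]

lemma deriv_BGar92 (β : ℂ → ℂ) (t x : ℂ) :
    deriv (BGar92 β t) x = -4 / (2 * x - 3 * β t) ^ 2 := by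
  rw [show deriv (BGar92 β t) x = deriv^[1] (BGar92 β t) x from rfl, iter_deriv_BGar92]
  norm_num
  field_simp
  ring

lemma deriv_deriv_deriv_BGar92 (β : ℂ → ℂ) (t x : ℂ) :
    deriv (deriv (deriv (BGar92 β t))) x = -96 / (2 * x - 3 * β t) ^ 4 := by
  rw [show deriv (deriv (deriv (BGar92 β t))) x = deriv^[3] (BGar92 β t) x from rfl,
    iter_deriv_BGar92]
  norm_num
  field_simp
  ring

lemma hasDerivAt_RGar92_x (ℏ : ℂ) (α β γ δ : ℂ → ℂ) (t : ℂ) {x : ℂ}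
    (hx : 2 * x - 3 * β t ≠ 0) :
    HasDerivAt (RGar92 ℏ α β γ δ t)
      (5 * x ^ 4 + 9 * t * x ^ 2 - 2 * α t * x
        + 3 * (9072 * t ^ 2 + 8000 * α t * β t - 34560 * t * (β t) ^ 2
          - 51975 * (β t) ^ 4 - 15120 * δ t) / 12320
        - ℏ * (36 * γ t / (2 * x - 3 * β t) ^ 2)
        - ℏ ^ 2 * (12 / (2 * x - 3 * β t) ^ 3)) x := by
  have hu : HasDerivAt (fun y : ℂ => 2 * y - 3 * β t) 2 x := by
    simpa using ((hasDerivAt_id x).const_mul (2 : ℂ)).sub_const (3 * β t)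
  have h : HasDerivAt (RGar92 ℏ α β γ δ t) _ x :=
    ((((((hasDerivAt_pow 5 x).add
        ((hasDerivAt_pow 3 x).const_mul (3 * t))).sub
        ((hasDerivAt_pow 2 x).const_mul (α t))).add
        ((hasDerivAt_id x).const_mul
          (3 * (9072 * t ^ 2 + 8000 * α t * β t - 34560 * t * (β t) ^ 2
            - 51975 * (β t) ^ 4 - 15120 * δ t) / 12320))).sub
        (hasDerivAt_const x _)).add
        (((hasDerivAt_const x (18 * γ t)).div hu hx).const_mul ℏ)).add
        (((hasDerivAt_const x (3 : ℂ)).div (hu.pow 2) (pow_ne_zero 2 hx)).const_mul (ℏ ^ 2))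
  simp only [Pi.pow_apply] at h
  convert h using 1
  generalize 2 * x - 3 * β t = u at hx ⊢
  field_simp
  ring

lemma hasDerivAt_RGar92_t (ℏ : ℂ) {α β γ δ : ℂ → ℂ} {t a b c d : ℂ} (x : ℂ)
    (hα : HasDerivAt α a t) (hβ : HasDerivAt β b t) (hγ : HasDerivAt γ c t)
    (hδ : HasDerivAt δ d t) (hx : 2 * x - 3 * β t ≠ 0) :
    HasDerivAt (fun s => RGar92 ℏ α β γ δ s x)
      (3 * x ^ 3 - a * x ^ 2
        + 3 * (18144 * t + 8000 * (a * β t + α t * b) - 34560 * ((β t) ^ 2 + 2 * t * β t * b)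
          - 207900 * (β t) ^ 3 * b - 15120 * d) / 12320 * x
        - 9 * (18144 * t * β t + 9072 * t ^ 2 * b + 1840 * (a * (β t) ^ 2 + 2 * α t * β t * b)
          - 6840 * ((β t) ^ 3 + 3 * t * (β t) ^ 2 * b) - 155925 * (β t) ^ 4 * b
          - 443520 * γ t * c - 15120 * (b * δ t + β t * d)) / 24640
        + ℏ * (18 * c / (2 * x - 3 * β t) + 54 * γ t * b / (2 * x - 3 * β t) ^ 2)
        + ℏ ^ 2 * (18 * b / (2 * x - 3 * β t) ^ 3)) t := by
  have hu : HasDerivAt (fun s : ℂ => 2 * x - 3 * β s) (-(3 * b)) t :=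
    (hβ.const_mul (3 : ℂ)).const_sub (2 * x)
  have h : HasDerivAt (fun s => RGar92 ℏ α β γ δ s x) _ t :=
    ((((((hasDerivAt_const t (x ^ 5)).add
        (((hasDerivAt_id t).const_mul (3 : ℂ)).mul_const (x ^ 3))).sub
        (hα.mul_const (x ^ 2))).add
        (((((((hasDerivAt_pow 2 t).const_mul (9072 : ℂ)).add
            ((hα.const_mul (8000 : ℂ)).mul hβ)).sub
            (((hasDerivAt_id t).const_mul (34560 : ℂ)).mul (hβ.pow 2))).sub
            ((hβ.pow 4).const_mul (51975 : ℂ))).sub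
            (hδ.const_mul (15120 : ℂ))).const_mul (3 : ℂ)
              |>.div_const (12320 : ℂ) |>.mul_const x)).sub
        ((((((((hasDerivAt_pow 2 t).const_mul (9072 : ℂ)).mul hβ).add
            ((hα.const_mul (1840 : ℂ)).mul (hβ.pow 2))).sub
            (((hasDerivAt_id t).const_mul (6840 : ℂ)).mul (hβ.pow 3))).sub
            ((hβ.pow 5).const_mul (31185 : ℂ))).sub
            ((hγ.pow 2).const_mul (221760 : ℂ))).sub
            ((hβ.const_mul (15120 : ℂ)).mul hδ)
              |>.const_mul (9 : ℂ) |>.div_const (24640 : ℂ))).add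
        (((hγ.const_mul (18 : ℂ)).div hu hx).const_mul ℏ)).add
        (((hasDerivAt_const t (3 : ℂ)).div (hu.pow 2) (pow_ne_zero 2 hx)).const_mul (ℏ ^ 2))
  simp only [Pi.pow_apply, id_eq] at h
  convert h using 1
  generalize 2 * x - 3 * β t = u at hx ⊢
  field_simp
  ring

/-- If `(α,β,γ,δ)` satisfy the stated ODE system in `t₂`, then the pair
`(R, B) = (RGar92, BGar92)` satisfies the isomonodromy (compatibility) identity
`2 ∂R/∂t₂ + ℏ² ∂³B/∂x³ − 4R ∂B/∂x − 2B ∂R/∂x = 0` for `x ≠ 3β/2`. -/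
theorem stmt8 (ℏ : ℂ) (hℏ : ℏ ≠ 0) (α β γ δ : ℂ → ℂ)
    (hα : Differentiable ℂ α) (hβ : Differentiable ℂ β)
    (hγ : Differentiable ℂ γ) (hδ : Differentiable ℂ δ)
    (h1 : ∀ t, ℏ * deriv α t = -3 * β t * ℏ / 2)
    (h2 : ∀ t, ℏ * deriv β t = -12 * γ t)
    (h3 : ∀ t, ℏ * deriv γ t =
      -9 * (336 * t ^ 2 - 160 * α t * β t + 1800 * t * (β t) ^ 2
        + 1925 * (β t) ^ 4 - 560 * δ t) / 12320)
    (h4 : ∀ t, ℏ * deriv δ t =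
      (103680 * t * β t * γ t - 12000 * α t * γ t + 311850 * (β t) ^ 3 * γ t
        + 728 * t * ℏ - 4665 * (β t) ^ 2 * ℏ) / 1890) :
    ∀ t x : ℂ, x ≠ 3 * β t / 2 →
      2 * deriv (fun s => RGar92 ℏ α β γ δ s x) t
        + ℏ ^ 2 * deriv (fun y =>
            deriv (fun y' => deriv (fun y'' => BGar92 β t y'') y') y) x
        - 4 * RGar92 ℏ α β γ δ t x * deriv (fun y => BGar92 β t y) x
        - 2 * BGar92 β t x * deriv (fun y => RGar92 ℏ α β γ δ t y) x = 0 := by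
  intro t x hx
  have hu : 2 * x - 3 * β t ≠ 0 := fun h => hx (by linear_combination h / 2)
  have solve : ∀ {f : ℂ → ℂ} {r : ℂ}, ℏ * deriv f t = r → deriv f t = r / ℏ :=
    fun h => eq_div_of_mul_eq hℏ (by rw [mul_comm, h])
  rw [(hasDerivAt_RGar92_t ℏ x (hα t).hasDerivAt (hβ t).hasDerivAt (hγ t).hasDerivAt
      (hδ t).hasDerivAt hu).deriv, (hasDerivAt_RGar92_x ℏ α β γ δ t hu).deriv,
    deriv_deriv_deriv_BGar92, deriv_BGar92,
    solve (h1 t), solve (h2 t), solve (h3 t), solve (h4 t)]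
  simp only [RGar92, BGar92]
  field_simp
  ring
end

section
/- The system ℏα' = −3βℏ/2, ℏβ' = −12γ, ℏγ' = −9(336t₂² − 160αβ + 1800t₂β² + 1925β⁴ − 560δ)/12320, ℏδ' = (103680t₂βγ − 12000αγ + 311850β³γ + 728t₂ℏ − 4665β²ℏ)/1890 implies the single fourth-order ODE ℏ² α⁽⁴⁾ + 40(α')³α'' + 36t₂ α'α'' + 4α α'' + 20(α')² + 6t₂ = 0 for α as a function of t₂. -/
/-!
Solving the system for the derivatives gives `α' = -(3/2) β`, `α'' = (18/ℏ) γ` and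
`α''' = -(81/(6160 ℏ²)) P`, where `P = 336t² - 160αβ + 1800tβ² + 1925β⁴ - 560δ`.
Differentiating `P` once more and eliminating `δ'` with the last equation leaves `α⁽⁴⁾`
as a rational expression in `t, α, β, γ`; substituting `β = -(2/3) α'` and
`γ = (ℏ/18) α''` turns the claimed equation into a polynomial identity.
-/

theorem deriv_eq_div_of_mul_deriv_eq {𝕜 : Type*} [NontriviallyNormedField 𝕜] {c : 𝕜}
    {f g : 𝕜 → 𝕜} (hc : c ≠ 0) (h : ∀ t, c * deriv f t = g t) :
    deriv f = fun t => g t / c :=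
  funext fun t => by rw [← h t, mul_div_cancel_left₀ _ hc]

theorem hasDerivAt_div_of_mul_deriv_eq {𝕜 : Type*} [NontriviallyNormedField 𝕜] {c : 𝕜}
    {f g : 𝕜 → 𝕜} (hc : c ≠ 0) (hf : Differentiable 𝕜 f) (h : ∀ t, c * deriv f t = g t)
    (t : 𝕜) : HasDerivAt f (g t / c) t := by
  simpa [deriv_eq_div_of_mul_deriv_eq hc h] using (hf t).hasDerivAt

section GarnierReduction

variable {ℏ : ℂ} {α β γ δ : ℂ → ℂ}

theorem deriv_alpha (hℏ : ℏ ≠ 0) (h1 : ∀ t, ℏ * deriv α t = -3 * β t * ℏ / 2) :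
    deriv α = fun t => -(3 / 2) * β t :=
  (deriv_eq_div_of_mul_deriv_eq hℏ h1).trans <| funext fun t => by field_simp

theorem iteratedDeriv_two_alpha (hℏ : ℏ ≠ 0)
    (h1 : ∀ t, ℏ * deriv α t = -3 * β t * ℏ / 2) (h2 : ∀ t, ℏ * deriv β t = -12 * γ t) :
    iteratedDeriv 2 α = fun t => 18 / ℏ * γ t := by
  funext t
  rw [iteratedDeriv_succ, iteratedDeriv_one, deriv_alpha hℏ h1, deriv_const_mul_field',
    deriv_eq_div_of_mul_deriv_eq hℏ h2]
  ring

theorem iteratedDeriv_three_alpha (hℏ : ℏ ≠ 0)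
    (h1 : ∀ t, ℏ * deriv α t = -3 * β t * ℏ / 2) (h2 : ∀ t, ℏ * deriv β t = -12 * γ t)
    (h3 : ∀ t, ℏ * deriv γ t =
      -9 * (336 * t ^ 2 - 160 * α t * β t + 1800 * t * (β t) ^ 2
        + 1925 * (β t) ^ 4 - 560 * δ t) / 12320) :
    iteratedDeriv 3 α = fun t => -81 / (6160 * ℏ ^ 2) *
      (336 * t ^ 2 - 160 * α t * β t + 1800 * t * β t ^ 2 + 1925 * β t ^ 4 - 560 * δ t) := by
  funext t
  rw [iteratedDeriv_succ, iteratedDeriv_two_alpha hℏ h1 h2, deriv_const_mul_field',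
    deriv_eq_div_of_mul_deriv_eq hℏ h3]
  field_simp
  ring

theorem iteratedDeriv_four_alpha (hℏ : ℏ ≠ 0) (hα : Differentiable ℂ α)
    (hβ : Differentiable ℂ β) (hδ : Differentiable ℂ δ)
    (h1 : ∀ t, ℏ * deriv α t = -3 * β t * ℏ / 2) (h2 : ∀ t, ℏ * deriv β t = -12 * γ t)
    (h3 : ∀ t, ℏ * deriv γ t =
      -9 * (336 * t ^ 2 - 160 * α t * β t + 1800 * t * (β t) ^ 2
        + 1925 * (β t) ^ 4 - 560 * δ t) / 12320)
    (h4 : ∀ t, ℏ * deriv δ t =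
      (103680 * t * β t * γ t - 12000 * α t * γ t + 311850 * (β t) ^ 3 * γ t
        + 728 * t * ℏ - 4665 * (β t) ^ 2 * ℏ) / 1890) (t : ℂ) :
    iteratedDeriv 4 α t = -81 / (6160 * ℏ ^ 2) *
      (672 * t - 160 * (-(3 / 2) * β t * β t + α t * (-12 * γ t / ℏ))
        + 1800 * (β t ^ 2 + t * (2 * β t * (-12 * γ t / ℏ)))
        + 1925 * (4 * β t ^ 3 * (-12 * γ t / ℏ))
        - 560 * ((103680 * t * β t * γ t - 12000 * α t * γ t + 311850 * β t ^ 3 * γ t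
          + 728 * t * ℏ - 4665 * β t ^ 2 * ℏ) / 1890 / ℏ)) := by
  have hα' : HasDerivAt α (-(3 / 2) * β t) t := by
    simpa [deriv_alpha hℏ h1] using (hα t).hasDerivAt
  have hβ' := hasDerivAt_div_of_mul_deriv_eq hℏ hβ h2 t
  have hδ' := hasDerivAt_div_of_mul_deriv_eq hℏ hδ h4 t
  have hP := ((((((hasDerivAt_pow 2 t).const_mul 336).sub ((hα'.mul hβ').const_mul 160)).add
    (((hasDerivAt_id' t).mul (hβ'.pow 2)).const_mul 1800)).add
    ((hβ'.pow 4).const_mul 1925)).sub (hδ'.const_mul 560)).const_mul (-81 / (6160 * ℏ ^ 2))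
  rw [iteratedDeriv_succ, iteratedDeriv_three_alpha hℏ h1 h2 h3]
  convert hP.deriv using 2
  · ext; simp only [Pi.pow_apply, Pi.mul_apply, Pi.add_apply, Pi.sub_apply]; ring
  · simp only [Pi.pow_apply]; push_cast; ring

end GarnierReduction

theorem stmt9_general (ℏ : ℂ) (hℏ : ℏ ≠ 0) (α β γ δ : ℂ → ℂ)
    (hα : Differentiable ℂ α) (hβ : Differentiable ℂ β)
    (hδ : Differentiable ℂ δ)
    (h1 : ∀ t, ℏ * deriv α t = -3 * β t * ℏ / 2)
    (h2 : ∀ t, ℏ * deriv β t = -12 * γ t)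
    (h3 : ∀ t, ℏ * deriv γ t =
      -9 * (336 * t ^ 2 - 160 * α t * β t + 1800 * t * (β t) ^ 2
        + 1925 * (β t) ^ 4 - 560 * δ t) / 12320)
    (h4 : ∀ t, ℏ * deriv δ t =
      (103680 * t * β t * γ t - 12000 * α t * γ t + 311850 * (β t) ^ 3 * γ t
        + 728 * t * ℏ - 4665 * (β t) ^ 2 * ℏ) / 1890) :
    ∀ t, ℏ ^ 2 * iteratedDeriv 4 α t
      + 40 * (deriv α t) ^ 3 * iteratedDeriv 2 α t
      + 36 * t * deriv α t * iteratedDeriv 2 α t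
      + 4 * α t * iteratedDeriv 2 α t
      + 20 * (deriv α t) ^ 2 + 6 * t = 0 := by
  intro t
  rw [iteratedDeriv_four_alpha hℏ hα hβ hδ h1 h2 h3 h4, iteratedDeriv_two_alpha hℏ h1 h2,
    deriv_alpha hℏ h1]
  field_simp
  ring

/-- The first-order system for `(α,β,γ,δ)` coming from the singularity reduction of
the Garnier system of type 9/2 implies the single fourth-order ODE
`ℏ²α⁽⁴⁾ + 40(α')³α'' + 36t₂α'α'' + 4αα'' + 20(α')² + 6t₂ = 0`. -/
theorem stmt9 (ℏ : ℂ) (hℏ : ℏ ≠ 0) (α β γ δ : ℂ → ℂ)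
    (hα : Differentiable ℂ α) (hβ : Differentiable ℂ β)
    (hγ : Differentiable ℂ γ) (hδ : Differentiable ℂ δ)
    (h1 : ∀ t, ℏ * deriv α t = -3 * β t * ℏ / 2)
    (h2 : ∀ t, ℏ * deriv β t = -12 * γ t)
    (h3 : ∀ t, ℏ * deriv γ t =
      -9 * (336 * t ^ 2 - 160 * α t * β t + 1800 * t * (β t) ^ 2
        + 1925 * (β t) ^ 4 - 560 * δ t) / 12320)
    (h4 : ∀ t, ℏ * deriv δ t =
      (103680 * t * β t * γ t - 12000 * α t * γ t + 311850 * (β t) ^ 3 * γ t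
        + 728 * t * ℏ - 4665 * (β t) ^ 2 * ℏ) / 1890) :
    ∀ t, ℏ ^ 2 * iteratedDeriv 4 α t
      + 40 * (deriv α t) ^ 3 * iteratedDeriv 2 α t
      + 36 * t * deriv α t * iteratedDeriv 2 α t
      + 4 * α t * iteratedDeriv 2 α t
      + 20 * (deriv α t) ^ 2 + 6 * t = 0 :=
  stmt9_general ℏ hℏ α β γ δ hα hβ hδ h1 h2 h3 h4
end

section
/- Under the change of variables (ξ₁, ξ₂, ξ₃, ξ₄) = (1/q₁, q₂/q₁², 4q₂p₂ + 4q₂/q₁, p₁q₁² + q₂ + 2p₂q₁q₂), the Hamiltonian system for the Garnier system of type 5/2+3/2 with Hamiltonian H₁ = p₁² − (q₁² + t₁)p₁ − 2p₂q₁q₂ − q₂ − t₂/q₂ (with t₂ constant) transforms into the polynomial/rational system: ℏξ₁' = 1 + t₁ξ₁² − 2ξ₁²ξ₂ + ξ₁³ξ₃ − 2ξ₁⁴ξ₄, ℏξ₂' = 2t₁ξ₁ξ₂ − 4ξ₁ξ₂² + 2ξ₁²ξ₂ξ₃ − 4ξ₁³ξ₂ξ₄, ℏξ₃' = 4t₁ξ₂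 − 8ξ₂² + 4ξ₁ξ₂ξ₃ − 8ξ₁²ξ₂ξ₄ − 4t₂ξ₁²/ξ₂, ℏξ₄' = t₁ξ₃/2 + ξ₁ξ₃²/2 − ξ₂ξ₃ − 2t₁ξ₁ξ₄ + 4ξ₁ξ₂ξ₄ − 3ξ₁²ξ₃ξ₄ + 4ξ₁³ξ₄² − 2t₂ξ₁/ξ₂. -/
/-!
Since `ℏ ξᵢ' = ∑ₓ (∂ξᵢ/∂x) · ℏ x'` over `x ∈ {q₁, q₂, p₁, p₂}`, each equation is the chain rule
for `ξᵢ` with the Hamiltonian equations substituted, weighted by the partial derivatives of `ξᵢ`;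
what remains is a rational identity in `q₁, q₂, p₁, p₂`, valid where `q₁, q₂ ≠ 0`.
-/

section ChainRule

variable {𝕜 : Type*} [NontriviallyNormedField 𝕜] {q₁ q₂ p₁ p₂ : 𝕜 → 𝕜} {q₁' q₂' p₁' p₂' t : 𝕜}

theorem hasDerivAt_xi₁ (hq₁ : HasDerivAt q₁ q₁' t) (h : q₁ t ≠ 0) :
    HasDerivAt (fun s => 1 / q₁ s) (-(1 / q₁ t ^ 2) * q₁') t :=
  ((hasDerivAt_const t 1).fun_div hq₁ h).congr_deriv (by ring)

theorem hasDerivAt_xi₂ (hq₁ : HasDerivAt q₁ q₁' t) (hq₂ : HasDerivAt q₂ q₂' t) (h : q₁ t ≠ 0) :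
    HasDerivAt (fun s => q₂ s / q₁ s ^ 2) (-(2 * q₂ t / q₁ t ^ 3) * q₁' + 1 / q₁ t ^ 2 * q₂') t :=
  (hq₂.fun_div (hq₁.fun_pow 2) (pow_ne_zero 2 h)).congr_deriv (by field_simp; ring)

theorem hasDerivAt_xi₃ (hq₁ : HasDerivAt q₁ q₁' t) (hq₂ : HasDerivAt q₂ q₂' t)
    (hp₂ : HasDerivAt p₂ p₂' t) (h : q₁ t ≠ 0) :
    HasDerivAt (fun s => 4 * q₂ s * p₂ s + 4 * q₂ s / q₁ s)
      (-(4 * q₂ t / q₁ t ^ 2) * q₁' + (4 * p₂ t + 4 / q₁ t) * q₂' + 4 * q₂ t * p₂') t :=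
  (((hq₂.const_mul 4).fun_mul hp₂).fun_add ((hq₂.const_mul 4).fun_div hq₁ h)).congr_deriv
    (by field_simp; ring)

theorem hasDerivAt_xi₄ (hq₁ : HasDerivAt q₁ q₁' t) (hq₂ : HasDerivAt q₂ q₂' t)
    (hp₁ : HasDerivAt p₁ p₁' t) (hp₂ : HasDerivAt p₂ p₂' t) :
    HasDerivAt (fun s => p₁ s * q₁ s ^ 2 + q₂ s + 2 * p₂ s * q₁ s * q₂ s)
      ((2 * p₁ t * q₁ t + 2 * p₂ t * q₂ t) * q₁' + (1 + 2 * p₂ t * q₁ t) * q₂'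
        + q₁ t ^ 2 * p₁' + 2 * q₁ t * q₂ t * p₂') t :=
  (((hp₁.fun_mul (hq₁.fun_pow 2)).fun_add hq₂).fun_add
    (((hp₂.const_mul 2).fun_mul hq₁).fun_mul hq₂)).congr_deriv (by push_cast; ring)

end ChainRule

theorem stmt12_general (ℏ t₂ : ℂ)
    (q1 q2 p1 p2 : ℂ → ℂ)
    (hq1d : Differentiable ℂ q1) (hq2d : Differentiable ℂ q2)
    (hp1d : Differentiable ℂ p1) (hp2d : Differentiable ℂ p2)
    (hq1 : ∀ t, q1 t ≠ 0) (hq2 : ∀ t, q2 t ≠ 0)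
    (hH1 : ∀ t, ℏ * deriv q1 t = 2 * p1 t - (q1 t) ^ 2 - t)
    (hH2 : ∀ t, ℏ * deriv q2 t = -2 * q1 t * q2 t)
    (hH3 : ∀ t, ℏ * deriv p1 t = 2 * q1 t * p1 t + 2 * p2 t * q2 t)
    (hH4 : ∀ t, ℏ * deriv p2 t = 2 * p2 t * q1 t + 1 - t₂ / (q2 t) ^ 2)
    (ξ1 ξ2 ξ3 ξ4 : ℂ → ℂ)
    (hξ1 : ξ1 = fun t => 1 / q1 t)
    (hξ2 : ξ2 = fun t => q2 t / (q1 t) ^ 2)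
    (hξ3 : ξ3 = fun t => 4 * q2 t * p2 t + 4 * q2 t / q1 t)
    (hξ4 : ξ4 = fun t => p1 t * (q1 t) ^ 2 + q2 t + 2 * p2 t * q1 t * q2 t) :
    ∀ t,
      ℏ * deriv ξ1 t = 1 + t * (ξ1 t) ^ 2 - 2 * (ξ1 t) ^ 2 * ξ2 t
        + (ξ1 t) ^ 3 * ξ3 t - 2 * (ξ1 t) ^ 4 * ξ4 t ∧
      ℏ * deriv ξ2 t = 2 * t * ξ1 t * ξ2 t - 4 * ξ1 t * (ξ2 t) ^ 2
        + 2 * (ξ1 t) ^ 2 * ξ2 t * ξ3 t - 4 * (ξ1 t) ^ 3 * ξ2 t * ξ4 t ∧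
      ℏ * deriv ξ3 t = 4 * t * ξ2 t - 8 * (ξ2 t) ^ 2 + 4 * ξ1 t * ξ2 t * ξ3 t
        - 8 * (ξ1 t) ^ 2 * ξ2 t * ξ4 t - 4 * t₂ * (ξ1 t) ^ 2 / ξ2 t ∧
      ℏ * deriv ξ4 t = t * ξ3 t / 2 + ξ1 t * (ξ3 t) ^ 2 / 2 - ξ2 t * ξ3 t
        - 2 * t * ξ1 t * ξ4 t + 4 * ξ1 t * ξ2 t * ξ4 t
        - 3 * (ξ1 t) ^ 2 * ξ3 t * ξ4 t + 4 * (ξ1 t) ^ 3 * (ξ4 t) ^ 2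
        - 2 * t₂ * ξ1 t / ξ2 t := by
  intro t
  have hq₁ := (hq1d t).hasDerivAt
  have hq₂ := (hq2d t).hasDerivAt
  have hp₁ := (hp1d t).hasDerivAt
  have hp₂ := (hp2d t).hasDerivAt
  have h₁ := hq1 t
  have h₂ := hq2 t
  subst hξ1 hξ2 hξ3 hξ4
  refine ⟨?_, ?_, ?_, ?_⟩
  · rw [(hasDerivAt_xi₁ hq₁ h₁).deriv]
    linear_combination (norm := (field_simp; ring)) -(1 / q1 t ^ 2) * hH1 t
  · rw [(hasDerivAt_xi₂ hq₁ hq₂ h₁).deriv]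
    linear_combination (norm := (field_simp; ring))
      -(2 * q2 t / q1 t ^ 3) * hH1 t + 1 / q1 t ^ 2 * hH2 t
  · rw [(hasDerivAt_xi₃ hq₁ hq₂ hp₂ h₁).deriv]
    linear_combination (norm := (field_simp; ring))
      -(4 * q2 t / q1 t ^ 2) * hH1 t + (4 * p2 t + 4 / q1 t) * hH2 t + 4 * q2 t * hH4 t
  · rw [(hasDerivAt_xi₄ hq₁ hq₂ hp₁ hp₂).deriv]
    linear_combination (norm := (field_simp; ring))
      (2 * p1 t * q1 t + 2 * p2 t * q2 t) * hH1 t + (1 + 2 * p2 t * q1 t) * hH2 t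
        + q1 t ^ 2 * hH3 t + 2 * q1 t * q2 t * hH4 t

/-- Under the change of variables
`(ξ₁,ξ₂,ξ₃,ξ₄) = (1/q₁, q₂/q₁², 4q₂p₂ + 4q₂/q₁, p₁q₁² + q₂ + 2p₂q₁q₂)`, the
Hamiltonian system for the Garnier system of type 5/2+3/2 (with
`H₁ = p₁² − (q₁²+t₁)p₁ − 2p₂q₁q₂ − q₂ − t₂/q₂`, `t₂` constant) transforms into the
stated rational system for `(ξ₁,ξ₂,ξ₃,ξ₄)`. -/
theorem stmt12 (ℏ t₂ : ℂ) (hℏ : ℏ ≠ 0) (ht₂ : t₂ ≠ 0)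
    (q1 q2 p1 p2 : ℂ → ℂ)
    (hq1d : Differentiable ℂ q1) (hq2d : Differentiable ℂ q2)
    (hp1d : Differentiable ℂ p1) (hp2d : Differentiable ℂ p2)
    (hq1 : ∀ t, q1 t ≠ 0) (hq2 : ∀ t, q2 t ≠ 0)
    (hH1 : ∀ t, ℏ * deriv q1 t = 2 * p1 t - (q1 t) ^ 2 - t)
    (hH2 : ∀ t, ℏ * deriv q2 t = -2 * q1 t * q2 t)
    (hH3 : ∀ t, ℏ * deriv p1 t = 2 * q1 t * p1 t + 2 * p2 t * q2 t)
    (hH4 : ∀ t, ℏ * deriv p2 t = 2 * p2 t * q1 t + 1 - t₂ / (q2 t) ^ 2)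
    (ξ1 ξ2 ξ3 ξ4 : ℂ → ℂ)
    (hξ1 : ξ1 = fun t => 1 / q1 t)
    (hξ2 : ξ2 = fun t => q2 t / (q1 t) ^ 2)
    (hξ3 : ξ3 = fun t => 4 * q2 t * p2 t + 4 * q2 t / q1 t)
    (hξ4 : ξ4 = fun t => p1 t * (q1 t) ^ 2 + q2 t + 2 * p2 t * q1 t * q2 t) :
    ∀ t,
      ℏ * deriv ξ1 t = 1 + t * (ξ1 t) ^ 2 - 2 * (ξ1 t) ^ 2 * ξ2 t
        + (ξ1 t) ^ 3 * ξ3 t - 2 * (ξ1 t) ^ 4 * ξ4 t ∧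
      ℏ * deriv ξ2 t = 2 * t * ξ1 t * ξ2 t - 4 * ξ1 t * (ξ2 t) ^ 2
        + 2 * (ξ1 t) ^ 2 * ξ2 t * ξ3 t - 4 * (ξ1 t) ^ 3 * ξ2 t * ξ4 t ∧
      ℏ * deriv ξ3 t = 4 * t * ξ2 t - 8 * (ξ2 t) ^ 2 + 4 * ξ1 t * ξ2 t * ξ3 t
        - 8 * (ξ1 t) ^ 2 * ξ2 t * ξ4 t - 4 * t₂ * (ξ1 t) ^ 2 / ξ2 t ∧
      ℏ * deriv ξ4 t = t * ξ3 t / 2 + ξ1 t * (ξ3 t) ^ 2 / 2 - ξ2 t * ξ3 t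
        - 2 * t * ξ1 t * ξ4 t + 4 * ξ1 t * ξ2 t * ξ4 t
        - 3 * (ξ1 t) ^ 2 * ξ3 t * ξ4 t + 4 * (ξ1 t) ^ 3 * (ξ4 t) ^ 2
        - 2 * t₂ * ξ1 t / ξ2 t :=
  stmt12_general ℏ t₂ q1 q2 p1 p2 hq1d hq2d hp1d hp2d hq1 hq2 hH1 hH2 hH3 hH4 ξ1 ξ2 ξ3 ξ4 hξ1 hξ2
    hξ3 hξ4
end

section
/- The system ℏα' = −βℏ/t₂, ℏβ' = −β(4γ+ℏ)/(2t₂), ℏγ' = (18t₂ − α²β² + 4αβ³ − 4β⁴ − 45β²δ)/(18t₂β), ℏδ' = 2(32αβγ − 100β²γ + 9αβℏ − 18β²ℏ)/(45t₂) implies, on any interval where t₂ ≠ 0, β ≠ 0, and α' ≠ 0, the single fourth-order ODE ℏ²(α⁽⁴⁾ + 2α⁽³⁾/t₂ − 4α''α⁽³⁾/α' − 3(α'')²/(t₂α') + 3(α'')³/(α')²) + 4α''/(t₂²α') + 12t₂(α')³α'' + 4α(α')²α'' + 4α(α')³/t₂ + 14(α')⁴ + 2/t₂³ = 0. -/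
open Set

/-!
Since `α' = -β/t`, the system determines `α''`, `α'''` and `α''''` successively as rational
functions of `(t, α, β, γ, δ)`: each is the derivative of the previous one with the system
substituted. Given `β`, the formulas for `α''` and `α'''` are solved for `γ` and `δ`, and the
formula for `α''''` then becomes the fourth-order equation, which is a rational identity.
-/

theorem iteratedDeriv_succ_eqOn {𝕜 F : Type*} [NontriviallyNormedField 𝕜] [NormedAddCommGroup F]
    [NormedSpace 𝕜 F] {f g g' : 𝕜 → F} {U : Set 𝕜} {n : ℕ} (hU : IsOpen U)
    (h : EqOn (iteratedDeriv n f) g U) (hg : ∀ x ∈ U, HasDerivAt g (g' x) x) :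
    EqOn (iteratedDeriv (n + 1) f) g' U := fun x hx => by
  rw [iteratedDeriv_succ, h.deriv hU hx, (hg x hx).deriv]

theorem hasDerivAt_of_mul_deriv_eq {𝕜 : Type*} [NontriviallyNormedField 𝕜] {f : 𝕜 → 𝕜}
    {x c v : 𝕜} (hc : c ≠ 0) (hf : DifferentiableAt 𝕜 f x) (h : c * deriv f x = v) :
    HasDerivAt f (v / c) x := by
  rw [← h, mul_div_cancel_left₀ _ hc]
  exact hf.hasDerivAt

-- The system solved for the derivatives, using `α²β² - 4αβ³ + 4β⁴ = β²(α - 2β)²`.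
structure SolvesReducedSystem (ℏ : ℂ) (U : Set ℂ) (α β γ δ : ℂ → ℂ) : Prop where
  hasDerivAt_α : ∀ x ∈ U, HasDerivAt α (-β x / x) x
  hasDerivAt_β : ∀ x ∈ U, HasDerivAt β (-β x * (4 * γ x + ℏ) / (2 * x * ℏ)) x
  hasDerivAt_γ : ∀ x ∈ U, HasDerivAt γ
    ((18 * x - β x ^ 2 * (α x - 2 * β x) ^ 2 - 45 * β x ^ 2 * δ x) / (18 * x * β x * ℏ)) x
  hasDerivAt_δ : ∀ x ∈ U, HasDerivAt δ
    (2 * (32 * α x * β x * γ x - 100 * β x ^ 2 * γ x + 9 * α x * β x * ℏ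
      - 18 * β x ^ 2 * ℏ) / (45 * x * ℏ)) x

namespace SolvesReducedSystem

variable {ℏ : ℂ} {U : Set ℂ} {α β γ δ : ℂ → ℂ}

theorem of_mul_deriv_eq (hℏ : ℏ ≠ 0) (hU : IsOpen U)
    (hα : DifferentiableOn ℂ α U) (hβ : DifferentiableOn ℂ β U)
    (hγ : DifferentiableOn ℂ γ U) (hδ : DifferentiableOn ℂ δ U)
    (h1 : ∀ t ∈ U, ℏ * deriv α t = -β t * ℏ / t)
    (h2 : ∀ t ∈ U, ℏ * deriv β t = -β t * (4 * γ t + ℏ) / (2 * t))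
    (h3 : ∀ t ∈ U, ℏ * deriv γ t =
      (18 * t - (α t) ^ 2 * (β t) ^ 2 + 4 * α t * (β t) ^ 3 - 4 * (β t) ^ 4
        - 45 * (β t) ^ 2 * δ t) / (18 * t * β t))
    (h4 : ∀ t ∈ U, ℏ * deriv δ t =
      2 * (32 * α t * β t * γ t - 100 * (β t) ^ 2 * γ t + 9 * α t * β t * ℏ
        - 18 * (β t) ^ 2 * ℏ) / (45 * t)) :
    SolvesReducedSystem ℏ U α β γ δ where
  hasDerivAt_α x hx := (hasDerivAt_of_mul_deriv_eq hℏ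
    (hα.differentiableAt (hU.mem_nhds hx)) (h1 x hx)).congr_deriv (by field_simp)
  hasDerivAt_β x hx := (hasDerivAt_of_mul_deriv_eq hℏ
    (hβ.differentiableAt (hU.mem_nhds hx)) (h2 x hx)).congr_deriv (by ring)
  hasDerivAt_γ x hx := (hasDerivAt_of_mul_deriv_eq hℏ
    (hγ.differentiableAt (hU.mem_nhds hx)) (h3 x hx)).congr_deriv (by ring)
  hasDerivAt_δ x hx := (hasDerivAt_of_mul_deriv_eq hℏ
    (hδ.differentiableAt (hU.mem_nhds hx)) (h4 x hx)).congr_deriv (by ring)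

theorem deriv_eqOn (hs : SolvesReducedSystem ℏ U α β γ δ) : EqOn (deriv α) (fun x => -β x / x) U :=
  fun x hx => (hs.hasDerivAt_α x hx).deriv

theorem iteratedDeriv_two_eqOn (hs : SolvesReducedSystem ℏ U α β γ δ) (hU : IsOpen U)
    (h0 : (0 : ℂ) ∉ U) (hℏ : ℏ ≠ 0) :
    EqOn (iteratedDeriv 2 α) (fun x => β x * (4 * γ x + 3 * ℏ) / (2 * ℏ * x ^ 2)) U := by
  refine iteratedDeriv_succ_eqOn hU (by rw [iteratedDeriv_one]; exact hs.deriv_eqOn) fun x hx => ?_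
  have hx0 : x ≠ 0 := fun h => h0 (h ▸ hx)
  refine ((hs.hasDerivAt_β x hx).fun_neg.fun_div (hasDerivAt_id' x) hx0).congr_deriv ?_
  field_simp
  ring

theorem iteratedDeriv_three_eqOn (hs : SolvesReducedSystem ℏ U α β γ δ) (hU : IsOpen U)
    (h0 : (0 : ℂ) ∉ U) (hℏ : ℏ ≠ 0) (hβ : ∀ x ∈ U, β x ≠ 0) :
    EqOn (iteratedDeriv 3 α) (fun x => (4 * (18 * x - β x ^ 2 * (α x - 2 * β x) ^ 2
      - 45 * β x ^ 2 * δ x) - 9 * β x * (4 * γ x + 3 * ℏ) * (4 * γ x + 5 * ℏ))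
        / (36 * x ^ 3 * ℏ ^ 2)) U := by
  refine iteratedDeriv_succ_eqOn hU (hs.iteratedDeriv_two_eqOn hU h0 hℏ) fun x hx => ?_
  have hx0 : x ≠ 0 := fun h => h0 (h ▸ hx)
  have hγ := hs.hasDerivAt_γ x hx
  have hnum := (hs.hasDerivAt_β x hx).fun_mul ((hγ.const_mul 4).add_const (3 * ℏ))
  have hden := (hasDerivAt_pow 2 x).const_mul (2 * ℏ)
  refine (hnum.fun_div hden (by simp [hx0, hℏ])).congr_deriv ?_
  field_simp [hβ x hx]
  ring

theorem iteratedDeriv_four_eqOn (hs : SolvesReducedSystem ℏ U α β γ δ) (hU : IsOpen U)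
    (h0 : (0 : ℂ) ∉ U) (hℏ : ℏ ≠ 0) (hβ : ∀ x ∈ U, β x ≠ 0) :
    EqOn (iteratedDeriv 4 α) (fun x => (-864 * x * ℏ - 576 * γ x * x + 945 * β x * ℏ ^ 3
        + 2556 * β x * γ x * ℏ ^ 2 + 2160 * β x * γ x ^ 2 * ℏ + 576 * β x * γ x ^ 3
        + 2880 * β x ^ 2 * δ x * ℏ + 2880 * β x ^ 2 * γ x * δ x + 544 * β x ^ 4 * ℏ
        + 1984 * β x ^ 4 * γ x - 400 * α x * β x ^ 3 * ℏ - 832 * α x * β x ^ 3 * γ x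
        + 64 * α x ^ 2 * β x ^ 2 * ℏ + 64 * α x ^ 2 * β x ^ 2 * γ x) / (72 * x ^ 4 * ℏ ^ 3)) U := by
  refine iteratedDeriv_succ_eqOn hU (hs.iteratedDeriv_three_eqOn hU h0 hℏ hβ) fun x hx => ?_
  have hx0 : x ≠ 0 := fun h => h0 (h ▸ hx)
  have Hα := hs.hasDerivAt_α x hx
  have Hβ := hs.hasDerivAt_β x hx
  have Hγ := hs.hasDerivAt_γ x hx
  have Hδ := hs.hasDerivAt_δ x hx
  have H₁ := (Hβ.fun_pow 2).fun_mul ((Hα.fun_sub (Hβ.const_mul 2)).fun_pow 2)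
  have H₂ := ((Hβ.fun_pow 2).const_mul 45).fun_mul Hδ
  have H₃ := ((Hβ.const_mul 9).fun_mul ((Hγ.const_mul 4).add_const (3 * ℏ))).fun_mul
    ((Hγ.const_mul 4).add_const (5 * ℏ))
  have hnum := ((((hasDerivAt_id' x).const_mul 18).fun_sub H₁).fun_sub H₂ |>.const_mul 4).fun_sub H₃
  have hden := ((hasDerivAt_pow 3 x).const_mul 36).mul_const (ℏ ^ 2)
  refine (hnum.fun_div hden (by simp [hx0, hℏ])).congr_deriv ?_
  field_simp [hβ x hx]
  ring

end SolvesReducedSystem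

theorem fourth_order_eq_zero {t ℏ a a₁ a₂ a₃ a₄ b c d : ℂ} (ht : t ≠ 0) (hℏ : ℏ ≠ 0) (hb : b ≠ 0)
    (h₁ : a₁ = -b / t) (h₂ : a₂ = b * (4 * c + 3 * ℏ) / (2 * ℏ * t ^ 2))
    (h₃ : a₃ = (4 * (18 * t - b ^ 2 * (a - 2 * b) ^ 2 - 45 * b ^ 2 * d)
      - 9 * b * (4 * c + 3 * ℏ) * (4 * c + 5 * ℏ)) / (36 * t ^ 3 * ℏ ^ 2))
    (h₄ : a₄ = (-864 * t * ℏ - 576 * c * t + 945 * b * ℏ ^ 3 + 2556 * b * c * ℏ ^ 2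
        + 2160 * b * c ^ 2 * ℏ + 576 * b * c ^ 3 + 2880 * b ^ 2 * d * ℏ
        + 2880 * b ^ 2 * c * d + 544 * b ^ 4 * ℏ + 1984 * b ^ 4 * c
        - 400 * a * b ^ 3 * ℏ - 832 * a * b ^ 3 * c
        + 64 * a ^ 2 * b ^ 2 * ℏ + 64 * a ^ 2 * b ^ 2 * c) / (72 * t ^ 4 * ℏ ^ 3)) :
    ℏ ^ 2 * (a₄ + 2 * a₃ / t - 4 * a₂ * a₃ / a₁ - 3 * a₂ ^ 2 / (t * a₁) + 3 * a₂ ^ 3 / a₁ ^ 2)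
      + 4 * a₂ / (t ^ 2 * a₁) + 12 * t * a₁ ^ 3 * a₂ + 4 * a * a₁ ^ 2 * a₂ + 4 * a * a₁ ^ 3 / t
      + 14 * a₁ ^ 4 + 2 / t ^ 3 = 0 := by
  subst_vars
  field_simp
  ring

theorem stmt15_general (ℏ : ℂ) (hℏ : ℏ ≠ 0) (U : Set ℂ) (hU : IsOpen U) (h0 : (0 : ℂ) ∉ U)
    (α β γ δ : ℂ → ℂ)
    (hα : DifferentiableOn ℂ α U) (hβd : DifferentiableOn ℂ β U)
    (hγ : DifferentiableOn ℂ γ U) (hδ : DifferentiableOn ℂ δ U)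
    (hβ0 : ∀ t ∈ U, β t ≠ 0)
    (h1 : ∀ t ∈ U, ℏ * deriv α t = -β t * ℏ / t)
    (h2 : ∀ t ∈ U, ℏ * deriv β t = -β t * (4 * γ t + ℏ) / (2 * t))
    (h3 : ∀ t ∈ U, ℏ * deriv γ t =
      (18 * t - (α t) ^ 2 * (β t) ^ 2 + 4 * α t * (β t) ^ 3 - 4 * (β t) ^ 4
        - 45 * (β t) ^ 2 * δ t) / (18 * t * β t))
    (h4 : ∀ t ∈ U, ℏ * deriv δ t =
      2 * (32 * α t * β t * γ t - 100 * (β t) ^ 2 * γ t + 9 * α t * β t * ℏ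
        - 18 * (β t) ^ 2 * ℏ) / (45 * t)) :
    ∀ t ∈ U,
      ℏ ^ 2 * (iteratedDeriv 4 α t + 2 * iteratedDeriv 3 α t / t
        - 4 * iteratedDeriv 2 α t * iteratedDeriv 3 α t / deriv α t
        - 3 * (iteratedDeriv 2 α t) ^ 2 / (t * deriv α t)
        + 3 * (iteratedDeriv 2 α t) ^ 3 / (deriv α t) ^ 2)
      + 4 * iteratedDeriv 2 α t / (t ^ 2 * deriv α t)
      + 12 * t * (deriv α t) ^ 3 * iteratedDeriv 2 α t
      + 4 * α t * (deriv α t) ^ 2 * iteratedDeriv 2 α t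
      + 4 * α t * (deriv α t) ^ 3 / t
      + 14 * (deriv α t) ^ 4 + 2 / t ^ 3 = 0 := by
  have hs := SolvesReducedSystem.of_mul_deriv_eq hℏ hU hα hβd hγ hδ h1 h2 h3 h4
  intro t ht
  exact fourth_order_eq_zero (fun h => h0 (h ▸ ht)) hℏ (hβ0 t ht) (hs.deriv_eqOn ht)
    (hs.iteratedDeriv_two_eqOn hU h0 hℏ ht) (hs.iteratedDeriv_three_eqOn hU h0 hℏ hβ0 ht)
    (hs.iteratedDeriv_four_eqOn hU h0 hℏ hβ0 ht)

/-- The first-order system for `(α,β,γ,δ)` coming from the singularity reduction of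
the Garnier system of type 5/2+3/2 implies, on any open set where `t₂ ≠ 0`, `β ≠ 0`
and `α' ≠ 0`, the single fourth-order ODE
`ℏ²(α⁽⁴⁾ + 2α⁽³⁾/t₂ − 4α''α⁽³⁾/α' − 3(α'')²/(t₂α') + 3(α'')³/(α')²)
  + 4α''/(t₂²α') + 12t₂(α')³α'' + 4α(α')²α'' + 4α(α')³/t₂ + 14(α')⁴ + 2/t₂³ = 0`. -/
theorem stmt15 (ℏ : ℂ) (hℏ : ℏ ≠ 0) (U : Set ℂ) (hU : IsOpen U) (h0 : (0 : ℂ) ∉ U)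
    (α β γ δ : ℂ → ℂ)
    (hα : DifferentiableOn ℂ α U) (hβd : DifferentiableOn ℂ β U)
    (hγ : DifferentiableOn ℂ γ U) (hδ : DifferentiableOn ℂ δ U)
    (hβ0 : ∀ t ∈ U, β t ≠ 0)
    (hα' : ∀ t ∈ U, deriv α t ≠ 0)
    (h1 : ∀ t ∈ U, ℏ * deriv α t = -β t * ℏ / t)
    (h2 : ∀ t ∈ U, ℏ * deriv β t = -β t * (4 * γ t + ℏ) / (2 * t))
    (h3 : ∀ t ∈ U, ℏ * deriv γ t =
      (18 * t - (α t) ^ 2 * (β t) ^ 2 + 4 * α t * (β t) ^ 3 - 4 * (β t) ^ 4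
        - 45 * (β t) ^ 2 * δ t) / (18 * t * β t))
    (h4 : ∀ t ∈ U, ℏ * deriv δ t =
      2 * (32 * α t * β t * γ t - 100 * (β t) ^ 2 * γ t + 9 * α t * β t * ℏ
        - 18 * (β t) ^ 2 * ℏ) / (45 * t)) :
    ∀ t ∈ U,
      ℏ ^ 2 * (iteratedDeriv 4 α t + 2 * iteratedDeriv 3 α t / t
        - 4 * iteratedDeriv 2 α t * iteratedDeriv 3 α t / deriv α t
        - 3 * (iteratedDeriv 2 α t) ^ 2 / (t * deriv α t)
        + 3 * (iteratedDeriv 2 α t) ^ 3 / (deriv α t) ^ 2)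
      + 4 * iteratedDeriv 2 α t / (t ^ 2 * deriv α t)
      + 12 * t * (deriv α t) ^ 3 * iteratedDeriv 2 α t
      + 4 * α t * (deriv α t) ^ 2 * iteratedDeriv 2 α t
      + 4 * α t * (deriv α t) ^ 3 / t
      + 14 * (deriv α t) ^ 4 + 2 / t ^ 3 = 0 :=
  stmt15_general ℏ hℏ U hU h0 α β γ δ hα hβd hγ hδ hβ0 h1 h2 h3 h4
end
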